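/- arXiv:2108.04416 — 2 statements merged into one kernel-verified Lean document; each statement's English description precedes it below -/
import Mathlib

section
/- Let A be a finite set of size a, B a set, τ > 0, ε ∈ (0,1), and define for a t-subset X of A and x ∈ A \ X the indicator I_t(X,x) = 1 if g_{B∪X}(x) ≥ (1−ε)τ and 0 otherwise (with I_t(X,x)=0 by convention when A\X=∅). If X is a uniformly random t-subset of A, x uniform in A\X, X' a uniformly random t'-subset, x' uniform in A\X', and t < t', then E[I_t(X,x)] ≥ E[I_{t'}(X',x')]. -/
open Classical in
/-- Expected value of the indicator `I_t(X,x)` where `X` is a uniformly random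
`t`-subset of `A` and `x` is uniform in `A \ X` (with the convention that the
indicator is `0` when `A \ X = ∅`). -/
noncomputable def expInd {V : Type*} [DecidableEq V]
    (g : Finset V → ℝ) (B A : Finset V) (τ ε : ℝ) (t : ℕ) : ℝ :=
  (∑ X ∈ A.powersetCard t,
      if (A \ X).Nonempty then
        (∑ x ∈ A \ X,
            if (1 - ε) * τ ≤ g (B ∪ X ∪ {x}) - g (B ∪ X) then (1 : ℝ) else 0)
          / ((A \ X).card : ℝ)
      else 0)
    / ((A.powersetCard t).card : ℝ)

open Classical in
/-- The indicator function. -/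
noncomputable def indF {V : Type*} [DecidableEq V]
    (g : Finset V → ℝ) (B : Finset V) (τ ε : ℝ) (X : Finset V) (x : V) : ℝ :=
  if (1 - ε) * τ ≤ g (B ∪ X ∪ {x}) - g (B ∪ X) then (1 : ℝ) else 0

open Classical in
/-- The unnormalized sum. -/
noncomputable def sumInd {V : Type*} [DecidableEq V]
    (g : Finset V → ℝ) (B A : Finset V) (τ ε : ℝ) (t : ℕ) : ℝ :=
  ∑ X ∈ A.powersetCard t, ∑ x ∈ A \ X, indF g B τ ε X x

lemma indF_nonneg {V : Type*} [DecidableEq V]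
    (g : Finset V → ℝ) (B : Finset V) (τ ε : ℝ) (X : Finset V) (x : V) :
    0 ≤ indF g B τ ε X x := by
  unfold indF; split <;> norm_num

lemma sumInd_nonneg {V : Type*} [DecidableEq V]
    (g : Finset V → ℝ) (B A : Finset V) (τ ε : ℝ) (t : ℕ) :
    0 ≤ sumInd g B A τ ε t :=
  Finset.sum_nonneg fun _ _ => Finset.sum_nonneg fun _ _ => indF_nonneg _ _ _ _ _ _

lemma expInd_nonneg {V : Type*} [DecidableEq V]
    (g : Finset V → ℝ) (B A : Finset V) (τ ε : ℝ) (t : ℕ) :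
    0 ≤ expInd g B A τ ε t := by
  unfold expInd
  apply div_nonneg _ (by positivity)
  apply Finset.sum_nonneg
  intro X _
  split
  · apply div_nonneg _ (by positivity)
    exact Finset.sum_nonneg fun x _ => by split <;> norm_num
  · exact le_refl 0

lemma expInd_eq {V : Type*} [DecidableEq V]
    (g : Finset V → ℝ) (B A : Finset V) (τ ε : ℝ) (t : ℕ) (ht : t < A.card) :
    expInd g B A τ ε t = sumInd g B A τ ε t / ((A.card - t : ℕ) * ((A.powersetCard t).card : ℝ)) := by
  unfold expInd sumInd indF
  rw [Finset.sum_congr rfl (fun X hX => ?_), ← Finset.sum_div, div_div, mul_comm]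
  have hX' := Finset.mem_powersetCard.mp hX
  have hcard : (A \ X).card = A.card - t := by
    rw [Finset.card_sdiff_of_subset hX'.1, hX'.2]
  have hne : (A \ X).Nonempty := by
    rw [← Finset.card_pos, hcard]; omega
  rw [if_pos hne, hcard]

lemma expInd_top {V : Type*} [DecidableEq V]
    (g : Finset V → ℝ) (B A : Finset V) (τ ε : ℝ) :
    expInd g B A τ ε A.card = 0 := by
  unfold expInd
  rw [Finset.sum_congr rfl (fun X hX => ?_), Finset.sum_const, smul_zero, zero_div]
  have hX' := Finset.mem_powersetCard.mp hX
  have : X = A := Finset.eq_of_subset_of_card_le hX'.1 (le_of_eq hX'.2.symm)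
  rw [if_neg]
  simp [this]

/-- Key reindexing: summing over (X', y ∈ X') with |X'| = s+1 equals summing over
(X, y ∈ A \ X) with |X| = s, via X = X'.erase y. -/
lemma sum_erase_insert_aux {V : Type*} [DecidableEq V] (A : Finset V) (s : ℕ)
    (F : Finset V → V → ℝ) :
    ∑ X ∈ A.powersetCard (s + 1), ∑ y ∈ X, F (X.erase y) y
      = ∑ X ∈ A.powersetCard s, ∑ y ∈ A \ X, F X y := by
  rw [Finset.sum_sigma', Finset.sum_sigma']
  refine Finset.sum_nbij' (fun p => ⟨p.1.erase p.2, p.2⟩) (fun p => ⟨insert p.2 p.1, p.2⟩)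
    ?_ ?_ ?_ ?_ ?_
  · rintro ⟨X, y⟩ hp
    simp only [Finset.mem_sigma, Finset.mem_powersetCard] at hp ⊢
    obtain ⟨⟨hXA, hXc⟩, hyX⟩ := hp
    refine ⟨⟨(Finset.erase_subset _ _).trans hXA, ?_⟩, ?_⟩
    · rw [Finset.card_erase_of_mem hyX, hXc]; omega
    · simp [Finset.mem_sdiff, hXA hyX]
  · rintro ⟨X, y⟩ hp
    simp only [Finset.mem_sigma, Finset.mem_powersetCard, Finset.mem_sdiff] at hp ⊢
    obtain ⟨⟨hXA, hXc⟩, hyA, hyX⟩ := hp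
    refine ⟨⟨Finset.insert_subset hyA hXA, ?_⟩, Finset.mem_insert_self _ _⟩
    rw [Finset.card_insert_of_notMem hyX, hXc]
  · rintro ⟨X, y⟩ hp
    simp only [Finset.mem_sigma, Finset.mem_powersetCard] at hp
    simp [Finset.insert_erase hp.2]
  · rintro ⟨X, y⟩ hp
    simp only [Finset.mem_sigma, Finset.mem_powersetCard, Finset.mem_sdiff] at hp
    simp [Finset.erase_insert hp.2.2]
  · rintro ⟨X, y⟩ _
    rfl

lemma marg_mono {V : Type*} [DecidableEq V]
    (g : Finset V → ℝ)
    (hmono : ∀ ⦃A B : Finset V⦄, B ⊆ A → g B ≤ g A)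
    (hsub : ∀ A B : Finset V, g (A ∩ B) + g (A ∪ B) ≤ g A + g B)
    (B X X' : Finset V) (hXX' : X ⊆ X') (x : V) :
    g (B ∪ X' ∪ {x}) - g (B ∪ X') ≤ g (B ∪ X ∪ {x}) - g (B ∪ X) := by
  have h := hsub (B ∪ X ∪ {x}) (B ∪ X')
  have hu : (B ∪ X ∪ {x}) ∪ (B ∪ X') = B ∪ X' ∪ {x} := by
    ext v
    simp only [Finset.mem_union, Finset.mem_singleton]
    constructor
    · rintro ((( h | h) | h) | (h | h)) <;> tauto
    · rintro ((h | h) | h)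
      · tauto
      · tauto
      · tauto
  have hi : B ∪ X ⊆ (B ∪ X ∪ {x}) ∩ (B ∪ X') := by
    intro v hv
    simp only [Finset.mem_inter, Finset.mem_union] at hv ⊢
    rcases hv with h | h
    · exact ⟨Or.inl (Or.inl h), Or.inl h⟩
    · exact ⟨Or.inl (Or.inr h), Or.inr (hXX' h)⟩
  have h2 := hmono hi
  rw [hu] at h
  linarith

lemma indF_mono {V : Type*} [DecidableEq V]
    (g : Finset V → ℝ)
    (hmono : ∀ ⦃A B : Finset V⦄, B ⊆ A → g B ≤ g A)
    (hsub : ∀ A B : Finset V, g (A ∩ B) + g (A ∪ B) ≤ g A + g B)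
    (B : Finset V) (τ ε : ℝ) (X X' : Finset V) (hXX' : X ⊆ X') (x : V) :
    indF g B τ ε X' x ≤ indF g B τ ε X x := by
  unfold indF
  have h := marg_mono g hmono hsub B X X' hXX' x
  split
  · rw [if_pos (le_trans (by assumption) h)]
  · split <;> norm_num

/-- The key counting inequality: (s+1) · S(s+1) ≤ (|A| - s - 1) · S(s). -/
lemma key_ineq {V : Type*} [DecidableEq V]
    (g : Finset V → ℝ)
    (hmono : ∀ ⦃A B : Finset V⦄, B ⊆ A → g B ≤ g A)
    (hsub : ∀ A B : Finset V, g (A ∩ B) + g (A ∪ B) ≤ g A + g B)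
    (B A : Finset V) (τ ε : ℝ) (s : ℕ) (hs : s + 1 ≤ A.card) :
    (s + 1 : ℝ) * sumInd g B A τ ε (s + 1)
      ≤ ((A.card - s - 1 : ℕ) : ℝ) * sumInd g B A τ ε s := by
  have step1 : (s + 1 : ℝ) * sumInd g B A τ ε (s + 1)
      = ∑ X ∈ A.powersetCard (s + 1), ∑ y ∈ X, ∑ x ∈ A \ X, indF g B τ ε X x := by
    unfold sumInd
    rw [Finset.mul_sum]
    refine Finset.sum_congr rfl fun X hX => ?_
    rw [Finset.sum_const, nsmul_eq_mul, (Finset.mem_powersetCard.mp hX).2]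
    push_cast
    ring
  have step2 : ∑ X ∈ A.powersetCard (s + 1), ∑ y ∈ X, ∑ x ∈ A \ X, indF g B τ ε X x
      ≤ ∑ X ∈ A.powersetCard (s + 1), ∑ y ∈ X, ∑ x ∈ A \ X, indF g B τ ε (X.erase y) x := by
    refine Finset.sum_le_sum fun X _ => Finset.sum_le_sum fun y _ =>
      Finset.sum_le_sum fun x _ => ?_
    exact indF_mono g hmono hsub B τ ε (X.erase y) X (Finset.erase_subset _ _) x
  have step3 : ∑ X ∈ A.powersetCard (s + 1), ∑ y ∈ X, ∑ x ∈ A \ X, indF g B τ ε (X.erase y) x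
      = ∑ X ∈ A.powersetCard s, ∑ y ∈ A \ X, ∑ x ∈ (A \ X).erase y, indF g B τ ε X x := by
    rw [← sum_erase_insert_aux A s (fun X y => ∑ x ∈ (A \ X).erase y, indF g B τ ε X x)]
    refine Finset.sum_congr rfl fun X hX => Finset.sum_congr rfl fun y hy => ?_
    congr 1
    have : A \ X = (A \ X.erase y).erase y := by
      rw [← Finset.sdiff_insert, Finset.insert_erase hy]
    rw [← this]
  have step4 : ∑ X ∈ A.powersetCard s, ∑ y ∈ A \ X, ∑ x ∈ (A \ X).erase y, indF g B τ ε X x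
      = ((A.card - s - 1 : ℕ) : ℝ) * sumInd g B A τ ε s := by
    unfold sumInd
    rw [Finset.mul_sum]
    refine Finset.sum_congr rfl fun X hX => ?_
    have hX' := Finset.mem_powersetCard.mp hX
    have hcard : (A \ X).card = A.card - s := by
      rw [Finset.card_sdiff_of_subset hX'.1, hX'.2]
    rw [Finset.sum_congr rfl (fun y hy => Finset.sum_erase_eq_sub hy)]
    rw [Finset.sum_sub_distrib, Finset.sum_const, nsmul_eq_mul, hcard]
    have hc1 : ((A.card - s : ℕ) : ℝ) = (A.card : ℝ) - s := by
      rw [Nat.cast_sub (by omega)]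
    have hc2 : ((A.card - s - 1 : ℕ) : ℝ) = (A.card : ℝ) - s - 1 := by
      rw [Nat.cast_sub (by omega : 1 ≤ A.card - s), hc1]
      norm_num
    rw [hc1, hc2]
    ring
  calc (s + 1 : ℝ) * sumInd g B A τ ε (s + 1)
      = _ := step1
    _ ≤ _ := step2
    _ = _ := step3
    _ = _ := step4

lemma expInd_step {V : Type*} [DecidableEq V]
    (g : Finset V → ℝ)
    (hmono : ∀ ⦃A B : Finset V⦄, B ⊆ A → g B ≤ g A)
    (hsub : ∀ A B : Finset V, g (A ∩ B) + g (A ∪ B) ≤ g A + g B)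
    (B A : Finset V) (τ ε : ℝ) (s : ℕ) (hs : s < A.card) :
    expInd g B A τ ε (s + 1) ≤ expInd g B A τ ε s := by
  rcases eq_or_lt_of_le (Nat.succ_le_of_lt hs) with heq | hlt
  · rw [show s + 1 = A.card from heq, expInd_top]
    exact expInd_nonneg g B A τ ε s
  · -- s + 1 < A.card
    rw [expInd_eq g B A τ ε (s + 1) hlt, expInd_eq g B A τ ε s hs]
    have hkey := key_ineq g hmono hsub B A τ ε s (le_of_lt hlt)
    have hchoose : (A.powersetCard s).card = A.card.choose s := Finset.card_powersetCard s A
    have hchoose' : (A.powersetCard (s+1)).card = A.card.choose (s+1) :=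
      Finset.card_powersetCard (s+1) A
    rw [hchoose, hchoose']
    set n := A.card with hn
    have hid : n.choose (s + 1) * (s + 1) = n.choose s * (n - s) := Nat.choose_succ_right_eq n s
    have hpos1 : (0 : ℝ) < ((n - (s+1) : ℕ) : ℝ) := by
      have : 0 < n - (s + 1) := by omega
      exact_mod_cast this
    have hpos2 : (0 : ℝ) < (n.choose (s+1) : ℝ) := by
      exact_mod_cast Nat.choose_pos (le_of_lt hlt)
    have hpos3 : (0 : ℝ) < ((n - s : ℕ) : ℝ) := by
      have : 0 < n - s := by omega
      exact_mod_cast this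
    have hpos4 : (0 : ℝ) < (n.choose s : ℝ) := by
      exact_mod_cast Nat.choose_pos (le_of_lt hs)
    rw [div_le_div_iff₀ (by positivity) (by positivity)]
    -- goal: sumInd (s+1) * ((n - s) * choose s) ≤ sumInd s * ((n - (s+1)) * choose (s+1))
    have hidR : (n.choose (s+1) : ℝ) * (s + 1) = (n.choose s : ℝ) * ((n - s : ℕ) : ℝ) := by
      exact_mod_cast hid
    have hsub1 : ((n - s - 1 : ℕ) : ℝ) = ((n - (s+1) : ℕ) : ℝ) := by
      congr 1
    rw [hsub1] at hkey
    nlinarith [sumInd_nonneg g B A τ ε s, sumInd_nonneg g B A τ ε (s+1), hkey,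
      mul_le_mul_of_nonneg_right hkey (le_of_lt hpos2)]

theorem stmt10 {V : Type*} [DecidableEq V]
    (g : Finset V → ℝ)
    (hmono : ∀ ⦃A B : Finset V⦄, B ⊆ A → g B ≤ g A)
    (hsub : ∀ A B : Finset V, g (A ∩ B) + g (A ∪ B) ≤ g A + g B)
    (B A : Finset V) (a : ℕ) (ha : A.card = a)
    (τ ε : ℝ) (hτ : 0 < τ) (hε0 : 0 < ε) (hε1 : ε < 1)
    (t t' : ℕ) (htt' : t < t') (ht' : t' ≤ a) :
    expInd g B A τ ε t' ≤ expInd g B A τ ε t := by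
  subst ha
  induction t' with
  | zero => omega
  | succ s ih =>
    rcases Nat.lt_or_ge t s with h | h
    · exact le_trans (expInd_step g hmono hsub B A τ ε s (by omega)) (ih h (by omega))
    · have : t = s := by omega
      subst this
      exact expInd_step g hmono hsub B A τ ε t (by omega)
end

section
/- Let r₁,...,r_p > 0 and c₁,...,c_p > 0 be such that the ratios c_i/r_i are nondecreasing in i (c₁/r₁ ≤ c₂/r₂ ≤ ... ≤ c_p/r_p), and let z_1 ≥ z_2 ≥ ... ≥ z_p ≥ z_{p+1} = 0 be reals with ∑_{j=i}^{p} r_j ≤ z_i for all i. Then ∑_{i=1}^{p} c_i ≤ ∑_{i=1}^{p} (z_i − z_{i+1})·(c_i / r_i). -/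
lemma abel_aux (q a : ℕ → ℝ) :
    ∀ p, 1 ≤ p →
      ∑ i ∈ Finset.range p, (a i - a (i + 1)) * q i
        = (∑ i ∈ Finset.range p, a i * (q i - if i = 0 then 0 else q (i - 1)))
          - a p * q (p - 1) := by
  intro p hp
  induction p, hp using Nat.le_induction with
  | base => simp [Finset.sum_range_succ]; ring
  | succ n hn ih =>
      rw [Finset.sum_range_succ, ih, Finset.sum_range_succ]
      have h1 : n ≠ 0 := by omega
      simp only [h1, if_false]
      have h2 : n + 1 - 1 = n := rfl
      rw [h2]
      ring

theorem stmt13 (p : ℕ) (hp : 0 < p) (r c z : ℕ → ℝ)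
    (hr : ∀ i < p, 0 < r i) (hc : ∀ i < p, 0 < c i)
    (hratio : ∀ i, i + 1 < p → c i / r i ≤ c (i + 1) / r (i + 1))
    (hzmono : ∀ i < p, z (i + 1) ≤ z i)
    (hznonneg : ∀ i ≤ p, 0 ≤ z i)
    (hzp : z p = 0)
    (hcover : ∀ i < p, ∑ j ∈ Finset.Ico i p, r j ≤ z i) :
    ∑ i ∈ Finset.range p, c i
      ≤ ∑ i ∈ Finset.range p, (z i - z (i + 1)) * (c i / r i) := by
  set q : ℕ → ℝ := fun i => c i / r i with hq
  set S : ℕ → ℝ := fun i => ∑ j ∈ Finset.Ico i p, r j with hS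
  have hSstep : ∀ i < p, S i - S (i + 1) = r i := by
    intro i hi
    have : ∑ j ∈ Finset.Ico i p, r j = r i + ∑ j ∈ Finset.Ico (i + 1) p, r j :=
      Finset.sum_eq_sum_Ico_succ_bot (by omega) r
    simp only [hS, this]; ring
  have hLHS : ∑ i ∈ Finset.range p, c i
      = ∑ i ∈ Finset.range p, (S i - S (i + 1)) * q i := by
    apply Finset.sum_congr rfl
    intro i hi
    rw [Finset.mem_range] at hi
    rw [hSstep i hi, hq, mul_comm, div_mul_cancel₀ _ (hr i hi).ne']
  have hSp : S p = 0 := by simp [hS]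
  rw [hLHS, abel_aux q S p hp, abel_aux q z p hp, hSp, hzp]
  simp only [zero_mul, sub_zero]
  apply Finset.sum_le_sum
  intro i hi
  rw [Finset.mem_range] at hi
  have hw : 0 ≤ q i - if i = 0 then 0 else q (i - 1) := by
    by_cases h : i = 0
    · subst h
      simp only [if_true, sub_zero, hq]
      exact le_of_lt (div_pos (hc 0 hi) (hr 0 hi))
    · simp only [h, if_false, hq]
      have h1 : i - 1 + 1 = i := by omega
      have h2 := hratio (i - 1) (by omega)
      rw [h1] at h2
      linarith
  have hSle : S i ≤ z i := hcover i hi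
  nlinarith [hw, hSle]
end
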